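/- Let (T,σ) be a leaf-colored tree, xy an edge in the BMG G(T,σ), and suppose there exists a color t in S∩(x,y) = σ(L(T(v_x))) ∩ σ(L(T(v_y))), where v_x, v_y are the children of u = lca_T(x,y) above x and y respectively. Then there exist leaves x* ∈ L(T(v_x)), y* ∈ L(T(v_y)) with σ(x*) = σ(x), σ(y*) = σ(y), and leaves z₁ ∈ L(T(v_x)), z₂ ∈ L(T(v_y)) with σ(z₁) = σ(z₂) = t, such that ⟨z₁ x* y* z₂⟩ is a good quartet in G(T,σ): x*z₁, x*y*, y*z₂ are edges, z₁y* and z₂x* are not edges, and (z₁,y*), (z₂,x*) are arcs of G(T,σ). -/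
import Mathlib


/-- A finite rooted tree, given by a parent function: every vertex reaches the
root along the parent chain. -/
structure PTree (V : Type*) where
  parent : V → Option V
  root : V
  root_parent : parent root = none
  connected : ∀ v : V, Relation.ReflTransGen (fun a b => parent a = some b) v root

namespace PTree

variable {V C : Type*}

/-- `T.anc a b` : `b` is an ancestor of `a` (i.e. `a ⪯ b` in the ancestor order). -/
def anc (T : PTree V) (a b : V) : Prop :=
  Relation.ReflTransGen (fun x y => T.parent x = some y) a b

/-- `v` is a child of `u`. -/
def child (T : PTree V) (v u : V) : Prop := T.parent v = some u

/-- A leaf is a vertex without children. -/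
def isLeaf (T : PTree V) (v : V) : Prop := ∀ w, ¬ T.child w v

/-- `u` is the last common ancestor of `x` and `y`. -/
def isLCA (T : PTree V) (u x y : V) : Prop :=
  T.anc x u ∧ T.anc y u ∧ ∀ w, T.anc x w → T.anc y w → T.anc u w

/-- `σ(L(T(v)))` : the set of colors of the leaves of the subtree rooted at `v`. -/
def leafColors (T : PTree V) (σ : V → C) (v : V) : Set C :=
  {c | ∃ x, T.isLeaf x ∧ T.anc x v ∧ σ x = c}

/-- `y` is a best match of `x` in `(T,σ)`. -/
def bestMatch (T : PTree V) (σ : V → C) (x y : V) : Prop :=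
  T.isLeaf x ∧ T.isLeaf y ∧ σ x ≠ σ y ∧
    ∀ y', T.isLeaf y' → σ y' = σ y →
      ∀ u u', T.isLCA u x y → T.isLCA u' x y' → T.anc u u'

/-- `x` and `y` are reciprocal best matches, i.e. `xy` is an edge of the BMG `G(T,σ)`. -/
def edge (T : PTree V) (σ : V → C) (x y : V) : Prop :=
  T.bestMatch σ x y ∧ T.bestMatch σ y x

/-- Every inner vertex (other than the planted root) has exactly two children. -/
def Binary (T : PTree V) : Prop :=
  ∀ u : V, u ≠ T.root → ¬ T.isLeaf u →
    ∃ v₁ v₂, v₁ ≠ v₂ ∧ T.child v₁ u ∧ T.child v₂ u ∧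
      ∀ w, T.child w u → w = v₁ ∨ w = v₂

/-- Adjacency in the color-set intersection graph `𝔠_T(u)`. -/
def csiAdj (T : PTree V) (σ : V → C) (u a b : V) : Prop :=
  a ≠ b ∧ T.child a u ∧ T.child b u ∧ (T.leafColors σ a ∩ T.leafColors σ b).Nonempty

/-- `a` and `b` lie in the same connected component of `𝔠_T(u)`. -/
def sameComp (T : PTree V) (σ : V → C) (u a b : V) : Prop :=
  Relation.ReflTransGen (T.csiAdj σ u) a b

/-- `S` is a connected component of `𝔠_T(u)` with more than one element. -/
def IsBigComp (T : PTree V) (σ : V → C) (u : V) (S : Set V) : Prop :=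
  (∃ a, T.child a u ∧ S = {b | T.sameComp σ u a b}) ∧ ∃ a ∈ S, ∃ b ∈ S, a ≠ b

end PTree

/-- `(T, σT)` explains the colored digraph `(E, σ)` on the gene set `L`, with
`ι` identifying the genes with the leaves of `T`. -/
def Explains {V L C : Type*} (T : PTree V) (ι : L → V) (σT : V → C) (σ : L → C)
    (E : L → L → Prop) : Prop :=
  Function.Injective ι ∧ (∀ l, T.isLeaf (ι l)) ∧ (∀ v, T.isLeaf v → ∃ l, ι l = v) ∧
    (∀ l, σT (ι l) = σ l) ∧ ∀ x y, E x y ↔ T.bestMatch σT (ι x) (ι y)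

/-- The parent function after contracting the edge `uv` (with `v` a child of `u`). -/
def contractedParent {V : Type*} [DecidableEq V] (T : PTree V) (u v w : V) : Option V :=
  (T.parent w).map (fun p => if p = v then u else p)

/-- One step towards the contracted parent when contracting all edges whose lower
endpoints form the set `A`. -/
def multiContractStep {V : Type*} (T : PTree V) (A : Set V) (a b : V) : Prop :=
  T.parent a = some b ∧ b ∈ A

/-- Event types for inner vertices of an event-labeled gene tree. -/
inductive Event : Type
  | speciation
  | duplication


namespace PTree

open Relation Classical

variable {V C : Type*}

lemma anc_refl (T : PTree V) (a : V) : T.anc a a := ReflTransGen.refl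

lemma anc_trans (T : PTree V) {a b c : V} (h1 : T.anc a b) (h2 : T.anc b c) : T.anc a c :=
  h1.trans h2

lemma anc_total (T : PTree V) : ∀ {a b c : V}, T.anc a b → T.anc a c →
    T.anc b c ∨ T.anc c b := by
  intro a b c hab
  induction hab using Relation.ReflTransGen.head_induction_on with
  | refl => exact fun hac => Or.inl hac
  | @head p q hstep htail ih =>
    intro hac
    rcases Relation.ReflTransGen.cases_head hac with h | ⟨m, hm, hmc⟩
    · exact Or.inr (h ▸ Relation.ReflTransGen.head hstep htail)
    · have hq : q = m := by rw [hstep] at hm; exact Option.some_injective _ hm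
      exact ih (hq ▸ hmc)

lemma no_cycle (T : PTree V) (v : V) :
    ¬ Relation.TransGen (fun a b => T.parent a = some b) v v := by
  have hr := T.connected v
  induction hr using Relation.ReflTransGen.head_induction_on with
  | refl =>
    intro h
    obtain ⟨m, hm, -⟩ := Relation.TransGen.head'_iff.mp h
    exact (by simp [T.root_parent] at hm)
  | @head p q hstep htail ih =>
    intro h
    obtain ⟨m, hm, hmp⟩ := Relation.TransGen.head'_iff.mp h
    have hq : q = m := by rw [hstep] at hm; exact Option.some_injective _ hm
    exact ih (Relation.TransGen.tail' (hq ▸ hmp) hstep)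

lemma anc_antisymm (T : PTree V) {a b : V} (hab : T.anc a b) (hba : T.anc b a) : a = b := by
  rcases Relation.ReflTransGen.cases_head hab with h | ⟨m, hm, hmb⟩
  · exact h
  · refine absurd ?_ (T.no_cycle a)
    exact Relation.TransGen.trans_left
      (Relation.TransGen.head' (r := fun x y => T.parent x = some y) hm hmb) hba

lemma not_anc_of_child (T : PTree V) {v u : V} (h : T.child v u) : ¬ T.anc u v := by
  intro hanc
  exact T.no_cycle u (Relation.TransGen.tail' (r := fun x y => T.parent x = some y) hanc h)

lemma anc_of_child (T : PTree V) {v u : V} (h : T.child v u) : T.anc v u :=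
  Relation.ReflTransGen.single h

lemma child_disjoint (T : PTree V) {u w1 w2 l : V} (h1 : T.child w1 u) (h2 : T.child w2 u)
    (hne : w1 ≠ w2) (hl1 : T.anc l w1) (hl2 : T.anc l w2) : False := by
  have haux : ∀ w w' : V, T.child w u → T.child w' u → T.anc w w' → w = w' := by
    intro w w' hw hw' hanc
    rcases Relation.ReflTransGen.cases_head hanc with h | ⟨m, hm, hmw⟩
    · exact h
    · have : u = m := by rw [hw] at hm; exact Option.some_injective _ hm
      exact absurd (this ▸ hmw) (T.not_anc_of_child hw')
  rcases T.anc_total hl1 hl2 with h | h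
  · exact hne (haux _ _ h1 h2 h)
  · exact hne (haux _ _ h2 h1 h).symm

/-- If `w` is an ancestor of `a` lying (weakly) below `p`, and `c` is the child of `p`
above `a`, then `w` lies below `c` provided `w ≠ p`. -/
lemma anc_to_child (T : PTree V) {c p a w : V} (hc : T.child c p) (hac : T.anc a c)
    (haw : T.anc a w) (hwp : T.anc w p) (hne : w ≠ p) : T.anc w c := by
  rcases T.anc_total haw hac with h | h
  · exact h
  · rcases Relation.ReflTransGen.cases_head h with h' | ⟨m, hm, hmw⟩
    · exact h' ▸ Relation.ReflTransGen.refl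
    · have : p = m := by rw [hc] at hm; exact Option.some_injective _ hm
      exact absurd (T.anc_antisymm hwp (this ▸ hmw)) hne

lemma leaf_anc_eq (T : PTree V) {v l : V} (hleaf : T.isLeaf v) (h : T.anc l v) : l = v := by
  rcases Relation.ReflTransGen.cases_tail h with h' | ⟨m, _, hm⟩
  · exact h'.symm
  · exact absurd hm (hleaf m)

lemma anc_through_child (T : PTree V) {v l : V} (h : T.anc l v) (hne : l ≠ v) :
    ∃ w, T.child w v ∧ T.anc l w := by
  rcases Relation.ReflTransGen.cases_tail h with h' | ⟨m, hm, hstep⟩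
  · exact absurd h'.symm hne
  · exact ⟨m, hstep, hm⟩

open Finset in
noncomputable def ancSet (T : PTree V) [Fintype V] (v : V) : Finset V :=
  Finset.univ.filter (fun w => T.anc v w)

lemma ancCard_lt (T : PTree V) [Fintype V] {a b : V} (hab : T.anc a b) (hne : a ≠ b) :
    (T.ancSet b).card < (T.ancSet a).card := by
  classical
  apply Finset.card_lt_card
  constructor
  · intro x hx
    simp only [ancSet, Finset.mem_filter, Finset.mem_univ, true_and] at hx ⊢
    exact hab.trans hx
  · intro hsub
    have ha : a ∈ T.ancSet a := by
      simp [ancSet, T.anc_refl]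
    have := hsub ha
    simp only [ancSet, Finset.mem_filter, Finset.mem_univ, true_and] at this
    exact hne (T.anc_antisymm hab this)

lemma exists_lca (T : PTree V) [Fintype V] (a b : V) : ∃ u, T.isLCA u a b := by
  classical
  set S : Finset V := Finset.univ.filter (fun w => T.anc a w ∧ T.anc b w) with hS
  have hroot : T.root ∈ S := by
    simp only [hS, Finset.mem_filter, Finset.mem_univ, true_and]
    exact ⟨T.connected a, T.connected b⟩
  obtain ⟨u, huS, hmax⟩ := S.exists_max_image (fun w => (T.ancSet w).card) ⟨_, hroot⟩
  simp only [hS, Finset.mem_filter, Finset.mem_univ, true_and] at huS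
  refine ⟨u, huS.1, huS.2, ?_⟩
  intro w haw hbw
  rcases T.anc_total huS.1 haw with h | h
  · exact h
  · by_cases hwu : w = u
    · exact hwu ▸ ReflTransGen.refl
    · have hwS : w ∈ S := by simp [hS, haw, hbw]
      exact absurd (T.ancCard_lt h hwu) (not_lt.mpr (hmax w hwS))

lemma lca_unique (T : PTree V) {u u' a b : V} (h1 : T.isLCA u a b) (h2 : T.isLCA u' a b) :
    u = u' :=
  T.anc_antisymm (h1.2.2 u' h2.1 h2.2.1) (h2.2.2 u h1.1 h1.2.1)

end PTree

namespace PTree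

variable {V C : Type*}

lemma isLCA_symm (T : PTree V) {u a b : V} (h : T.isLCA u a b) : T.isLCA u b a :=
  ⟨h.2.1, h.1, fun w h1 h2 => h.2.2 w h2 h1⟩

lemma exists_min_colored (T : PTree V) [Fintype V] (σ : V → C) (vx : V) (c1 t : C)
    (h1 : c1 ∈ T.leafColors σ vx) (h2 : t ∈ T.leafColors σ vx) :
    ∃ v1, T.anc v1 vx ∧ c1 ∈ T.leafColors σ v1 ∧ t ∈ T.leafColors σ v1 ∧
      ∀ w, T.anc w v1 → c1 ∈ T.leafColors σ w → t ∈ T.leafColors σ w → w = v1 := by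
  classical
  set S : Finset V :=
    Finset.univ.filter (fun v => T.anc v vx ∧ c1 ∈ T.leafColors σ v ∧ t ∈ T.leafColors σ v)
    with hS
  have hvxS : vx ∈ S := by
    simp only [hS, Finset.mem_filter, Finset.mem_univ, true_and]
    exact ⟨T.anc_refl vx, h1, h2⟩
  obtain ⟨v1, hv1S, hmax⟩ := S.exists_max_image (fun w => (T.ancSet w).card) ⟨_, hvxS⟩
  simp only [hS, Finset.mem_filter, Finset.mem_univ, true_and] at hv1S
  refine ⟨v1, hv1S.1, hv1S.2.1, hv1S.2.2, ?_⟩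
  intro w hwv1 hwc1 hwt
  by_contra hne
  have hwS : w ∈ S := by
    simp only [hS, Finset.mem_filter, Finset.mem_univ, true_and]
    exact ⟨hwv1.trans hv1S.1, hwc1, hwt⟩
  exact absurd (T.ancCard_lt hwv1 hne) (not_lt.mpr (hmax w hwS))

lemma inner_pair (T : PTree V) [Fintype V] (σ : V → C) (vx : V) (c1 t : C)
    (h1 : c1 ∈ T.leafColors σ vx) (h2 : t ∈ T.leafColors σ vx) (hne : c1 ≠ t) :
    ∃ a b v1, T.isLeaf a ∧ T.isLeaf b ∧ σ a = c1 ∧ σ b = t ∧ T.anc a vx ∧ T.anc b vx ∧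
      T.isLCA v1 a b ∧ T.anc v1 vx ∧
      (∀ b', T.isLeaf b' → σ b' = t → ∀ w, T.anc a w → T.anc b' w → T.anc v1 w) ∧
      (∀ a', T.isLeaf a' → σ a' = c1 → ∀ w, T.anc b w → T.anc a' w → T.anc v1 w) := by
  obtain ⟨v1, hv1x, hc1, ht1, hmin⟩ := T.exists_min_colored σ vx c1 t h1 h2
  obtain ⟨a, hal, hav1, hσa⟩ := hc1
  obtain ⟨b, hbl, hbv1, hσb⟩ := ht1
  have hav1ne : a ≠ v1 := by
    intro h; subst h
    have hba := T.leaf_anc_eq hal hbv1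
    exact hne (by rw [← hσa, ← hσb, hba])
  have hbv1ne : b ≠ v1 := by
    intro h; subst h
    have hab := T.leaf_anc_eq hbl hav1
    exact hne (by rw [← hσa, ← hσb, hab])
  obtain ⟨w1, hw1c, haw1⟩ := T.anc_through_child hav1 hav1ne
  obtain ⟨w2, hw2c, hbw2⟩ := T.anc_through_child hbv1 hbv1ne
  have hw1v1 : w1 ≠ v1 := fun h => T.not_anc_of_child (h ▸ hw1c) (T.anc_refl v1)
  have hw2v1 : w2 ≠ v1 := fun h => T.not_anc_of_child (h ▸ hw2c) (T.anc_refl v1)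
  have claimA : ∀ b', T.isLeaf b' → σ b' = t → ∀ w, T.anc a w → T.anc b' w → T.anc v1 w := by
    intro b' hb'l hb't w haw hb'w
    rcases T.anc_total haw hav1 with h | h
    · by_cases hwv1 : w = v1
      · exact hwv1 ▸ T.anc_refl v1
      · have hww1 : T.anc w w1 := T.anc_to_child hw1c haw1 haw h hwv1
        exact absurd (hmin w1 (T.anc_of_child hw1c)
          ⟨a, hal, haw1, hσa⟩ ⟨b', hb'l, hb'w.trans hww1, hb't⟩) hw1v1
    · exact h
  have claimB : ∀ a', T.isLeaf a' → σ a' = c1 → ∀ w, T.anc b w → T.anc a' w → T.anc v1 w := by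
    intro a' ha'l ha'c w hbw ha'w
    rcases T.anc_total hbw hbv1 with h | h
    · by_cases hwv1 : w = v1
      · exact hwv1 ▸ T.anc_refl v1
      · have hww2 : T.anc w w2 := T.anc_to_child hw2c hbw2 hbw h hwv1
        exact absurd (hmin w2 (T.anc_of_child hw2c)
          ⟨a', ha'l, ha'w.trans hww2, ha'c⟩ ⟨b, hbl, hbw2, hσb⟩) hw2v1
    · exact h
  exact ⟨a, b, v1, hal, hbl, hσa, hσb, hav1.trans hv1x, hbv1.trans hv1x,
    ⟨hav1, hbv1, fun w hw1 hw2 => claimA b hbl hσb w hw1 hw2⟩, hv1x, claimA, claimB⟩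

lemma lca_cross (T : PTree V) {u vx vy a b : V} (hvx : T.child vx u) (hvy : T.child vy u)
    (hne : vx ≠ vy) (ha : T.anc a vx) (hb : T.anc b vy) : T.isLCA u a b := by
  refine ⟨ha.trans (T.anc_of_child hvx), hb.trans (T.anc_of_child hvy), ?_⟩
  intro w haw hbw
  rcases T.anc_total haw (ha.trans (T.anc_of_child hvx)) with h | h
  · by_cases hwu : w = u
    · exact hwu ▸ T.anc_refl u
    · have hwvx : T.anc w vx := T.anc_to_child hvx ha haw h hwu
      exact (T.child_disjoint hvx hvy hne (hbw.trans hwvx) hb).elim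
  · exact h

lemma cross_min (T : PTree V) (σ : V → C) {u vx a : V} {c : C} (hvx : T.child vx u)
    (ha : T.anc a vx) (hc : c ∉ T.leafColors σ vx) :
    ∀ y', T.isLeaf y' → σ y' = c → ∀ w, T.anc a w → T.anc y' w → T.anc u w := by
  intro y' hy'l hy'c w haw hy'w
  rcases T.anc_total haw (ha.trans (T.anc_of_child hvx)) with h | h
  · by_cases hwu : w = u
    · exact hwu ▸ T.anc_refl u
    · have hwvx : T.anc w vx := T.anc_to_child hvx ha haw h hwu
      exact absurd ⟨y', hy'l, hy'w.trans hwvx, hy'c⟩ hc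
  · exact h

end PTree

/-- If `xy` is an edge of `G(T,σ)` and `t ∈ S∩(x,y)`, then there is
a good quartet `⟨z₁ x* y* z₂⟩` with `σ(x*) = σ(x)`, `σ(y*) = σ(y)`,
`σ(z₁) = σ(z₂) = t`, `x*, z₁ ∈ L(T(v_x))` and `y*, z₂ ∈ L(T(v_y))`. -/
theorem stmt_9 {V C : Type*} [Fintype V] (T : PTree V) (σ : V → C)
    (x y u vx vy : V) (t : C)
    (hedge : T.edge σ x y) (hu : T.isLCA u x y)
    (hvx : T.child vx u) (hvy : T.child vy u)
    (hxvx : T.anc x vx) (hyvy : T.anc y vy)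
    (ht : t ∈ T.leafColors σ vx ∩ T.leafColors σ vy) :
    ∃ xs ys z₁ z₂ : V,
      T.isLeaf xs ∧ T.isLeaf ys ∧ T.isLeaf z₁ ∧ T.isLeaf z₂ ∧
      σ xs = σ x ∧ σ ys = σ y ∧ σ z₁ = t ∧ σ z₂ = t ∧
      T.anc xs vx ∧ T.anc z₁ vx ∧ T.anc ys vy ∧ T.anc z₂ vy ∧
      T.edge σ xs z₁ ∧ T.edge σ xs ys ∧ T.edge σ ys z₂ ∧
      ¬ T.edge σ z₁ ys ∧ ¬ T.edge σ z₂ xs ∧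
      T.bestMatch σ z₁ ys ∧ T.bestMatch σ z₂ xs := by
  classical
  obtain ⟨hbxy, hbyx⟩ := hedge
  obtain ⟨hxl, hyl, hσxy, hbmx⟩ := hbxy
  obtain ⟨-, -, -, hbmy⟩ := hbyx
  obtain ⟨htx', hty'⟩ := ht
  have hnux : ¬ T.anc u vx := T.not_anc_of_child hvx
  have hnuy : ¬ T.anc u vy := T.not_anc_of_child hvy
  have hvxy : vx ≠ vy := by
    intro h; subst h
    exact hnux (hu.2.2 vx hxvx hyvy)
  have hycx : σ y ∉ T.leafColors σ vx := by
    rintro ⟨y2, hy2l, hy2a, hy2c⟩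
    obtain ⟨u', hu'⟩ := T.exists_lca x y2
    have h1 : T.anc u u' := hbmx y2 hy2l hy2c u u' hu hu'
    exact hnux (h1.trans (hu'.2.2 vx hxvx hy2a))
  have hxcy : σ x ∉ T.leafColors σ vy := by
    rintro ⟨x2, hx2l, hx2a, hx2c⟩
    obtain ⟨u', hu'⟩ := T.exists_lca y x2
    have h1 : T.anc u u' := hbmy x2 hx2l hx2c u u' (T.isLCA_symm hu) hu'
    exact hnuy (h1.trans (hu'.2.2 vy hyvy hx2a))
  have htnx : σ x ≠ t := fun h => hxcy (h ▸ hty')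
  have htny : σ y ≠ t := fun h => hycx (h ▸ htx')
  obtain ⟨xs, z₁, v1, hxsl, hz1l, hσxs, hσz1, hxsvx, hz1vx, hlca1, hv1vx, hA1, hB1⟩ :=
    T.inner_pair σ vx (σ x) t ⟨x, hxl, hxvx, rfl⟩ htx' htnx
  obtain ⟨ys, z₂, v2, hysl, hz2l, hσys, hσz2, hysvy, hz2vy, hlca2, hv2vy, hA2, hB2⟩ :=
    T.inner_pair σ vy (σ y) t ⟨y, hyl, hyvy, rfl⟩ hty' htny
  have hlcaXY : T.isLCA u xs ys := T.lca_cross hvx hvy hvxy hxsvx hysvy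
  -- best matches within T(vx)
  have bm_xs_z1 : T.bestMatch σ xs z₁ := by
    refine ⟨hxsl, hz1l, by rw [hσxs, hσz1]; exact htnx, ?_⟩
    intro y' hl hc u1 u2 h1 h2
    rw [T.lca_unique h1 hlca1]
    exact hA1 y' hl (hσz1 ▸ hc) u2 h2.1 h2.2.1
  have bm_z1_xs : T.bestMatch σ z₁ xs := by
    refine ⟨hz1l, hxsl, by rw [hσxs, hσz1]; exact htnx.symm, ?_⟩
    intro y' hl hc u1 u2 h1 h2
    rw [T.lca_unique h1 (T.isLCA_symm hlca1)]
    exact hB1 y' hl (hσxs ▸ hc) u2 h2.1 h2.2.1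
  have bm_ys_z2 : T.bestMatch σ ys z₂ := by
    refine ⟨hysl, hz2l, by rw [hσys, hσz2]; exact htny, ?_⟩
    intro y' hl hc u1 u2 h1 h2
    rw [T.lca_unique h1 hlca2]
    exact hA2 y' hl (hσz2 ▸ hc) u2 h2.1 h2.2.1
  have bm_z2_ys : T.bestMatch σ z₂ ys := by
    refine ⟨hz2l, hysl, by rw [hσys, hσz2]; exact htny.symm, ?_⟩
    intro y' hl hc u1 u2 h1 h2
    rw [T.lca_unique h1 (T.isLCA_symm hlca2)]
    exact hB2 y' hl (hσys ▸ hc) u2 h2.1 h2.2.1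
  -- best matches across
  have bm_xs_ys : T.bestMatch σ xs ys := by
    refine ⟨hxsl, hysl, by rw [hσxs, hσys]; exact hσxy, ?_⟩
    intro y' hl hc u1 u2 h1 h2
    rw [T.lca_unique h1 hlcaXY]
    exact T.cross_min σ hvx hxsvx hycx y' hl (hσys ▸ hc) u2 h2.1 h2.2.1
  have bm_ys_xs : T.bestMatch σ ys xs := by
    refine ⟨hysl, hxsl, by rw [hσxs, hσys]; exact hσxy.symm, ?_⟩
    intro y' hl hc u1 u2 h1 h2
    rw [T.lca_unique h1 (T.isLCA_symm hlcaXY)]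
    exact T.cross_min σ hvy hysvy hxcy y' hl (hσxs ▸ hc) u2 h2.1 h2.2.1
  have bm_z1_ys : T.bestMatch σ z₁ ys := by
    refine ⟨hz1l, hysl, by rw [hσz1, hσys]; exact fun h => htny h.symm, ?_⟩
    intro y' hl hc u1 u2 h1 h2
    rw [T.lca_unique h1 (T.lca_cross hvx hvy hvxy hz1vx hysvy)]
    exact T.cross_min σ hvx hz1vx hycx y' hl (hσys ▸ hc) u2 h2.1 h2.2.1
  have bm_z2_xs : T.bestMatch σ z₂ xs := by
    refine ⟨hz2l, hxsl, by rw [hσz2, hσxs]; exact fun h => htnx h.symm, ?_⟩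
    intro y' hl hc u1 u2 h1 h2
    rw [T.lca_unique h1 (T.lca_cross hvy hvx hvxy.symm hz2vy hxsvx)]
    exact T.cross_min σ hvy hz2vy hxcy y' hl (hσxs ▸ hc) u2 h2.1 h2.2.1
  -- non-edges
  have ne_z1_ys : ¬ T.edge σ z₁ ys := by
    rintro ⟨-, hb⟩
    have := hb.2.2.2 z₂ hz2l (by rw [hσz2, hσz1]) u v2
      (T.lca_cross hvy hvx hvxy.symm hysvy hz1vx) hlca2
    exact hnuy (this.trans hv2vy)
  have ne_z2_xs : ¬ T.edge σ z₂ xs := by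
    rintro ⟨-, hb⟩
    have := hb.2.2.2 z₁ hz1l (by rw [hσz1, hσz2]) u v1
      (T.lca_cross hvx hvy hvxy hxsvx hz2vy) hlca1
    exact hnux (this.trans hv1vx)
  exact ⟨xs, ys, z₁, z₂, hxsl, hysl, hz1l, hz2l, hσxs, hσys, hσz1, hσz2,
    hxsvx, hz1vx, hysvy, hz2vy, ⟨bm_xs_z1, bm_z1_xs⟩, ⟨bm_xs_ys, bm_ys_xs⟩,
    ⟨bm_ys_z2, bm_z2_ys⟩, ne_z1_ys, ne_z2_xs, bm_z1_ys, bm_z2_xs⟩
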